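/- Let X be a normed linear space and let r : X → B₁ be the radial retraction defined by r(x) = x if ‖x‖ ≤ 1 and r(x) = x/‖x‖ if ‖x‖ > 1, where B₁ = {x : ‖x‖ ≤ 1}. Then r is continuous, and for each bounded subset A of X, r(A) ⊆ cl co(A ∪ {0}); consequently γ(r(A)) ≤ γ(A), i.e. r is a 1-set-contractive map. -/
import Mathlib


open Metric Set Filter Topology Pointwise
open scoped ENNReal

/-- Kuratowski measure of noncompactness: the infimum of all `e` such that `A` can be
covered by finitely many sets of diameter at most `e` (`∞` if no such cover exists,
in particular for unbounded sets). -/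
noncomputable def kuratowski {X : Type*} [PseudoEMetricSpace X] (A : Set X) : ℝ≥0∞ :=
  sInf {e : ℝ≥0∞ | ∃ cov : Finset (Set X), (A ⊆ ⋃ s ∈ cov, s) ∧ ∀ s ∈ cov, EMetric.diam s ≤ e}

/-- `S : C → 2^X` is condensing if `γ(S(A)) < γ(A)` for every `A ⊆ C` with `γ(A) > 0`. -/
def Condensing {X : Type*} [PseudoEMetricSpace X] (C : Set X) (S : X → Set X) : Prop :=
  ∀ A ⊆ C, 0 < kuratowski A → kuratowski (⋃ x ∈ A, S x) < kuratowski A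

/-- `S : C → 2^X` is `k`-set-contractive if `γ(S(A)) ≤ k·γ(A)` for every `A ⊆ C`
with `γ(A) > 0`. -/
def SetContractive {X : Type*} [PseudoEMetricSpace X] (k : ℝ≥0∞) (C : Set X) (S : X → Set X) :
    Prop :=
  ∀ A ⊆ C, 0 < kuratowski A → kuratowski (⋃ x ∈ A, S x) ≤ k * kuratowski A

/-- `S` is almost lower semicontinuous on `C`: at every `x ∈ C` and every `ε > 0` there is a
neighborhood `U` of `x` in `C` with `⋂ z ∈ U, B(S(z); ε) ≠ ∅`. -/
def AlmostLSCOn {Z Y : Type*} [TopologicalSpace Z] [PseudoEMetricSpace Y] (C : Set Z)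
    (S : Z → Set Y) : Prop :=
  ∀ x ∈ C, ∀ ε : ℝ, 0 < ε → ∃ U ∈ 𝓝[C] x, (⋂ z ∈ U, Metric.thickening ε (S z)).Nonempty

/-- `S` is lower semicontinuous on `C`: for each `x ∈ C` and open `V` meeting `S x` there is a
neighborhood `U` of `x` in `C` such that `S z` meets `V` for all `z ∈ U`. -/
def LowerSemicontinuousCorrOn {Z Y : Type*} [TopologicalSpace Z] [TopologicalSpace Y]
    (C : Set Z) (S : Z → Set Y) : Prop :=
  ∀ x ∈ C, ∀ V : Set Y, IsOpen V → (S x ∩ V).Nonempty →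
    ∃ U ∈ 𝓝[C] x, ∀ z ∈ U, (S z ∩ V).Nonempty

/-- `T : Ω × C → 2^Y` is a random operator: for each `x ∈ C`, `ω ↦ T ω x` is (weakly)
measurable. -/
def RandomOperator {Ω X Y : Type*} [MeasurableSpace Ω] [TopologicalSpace Y] (C : Set X)
    (T : Ω → X → Set Y) : Prop :=
  ∀ x ∈ C, ∀ V : Set Y, IsOpen V → MeasurableSet {ω | (T ω x ∩ V).Nonempty}

/-- `T` has a random fixed point: a measurable `ξ : Ω → C` with `ξ ω ∈ T ω (ξ ω)` for all `ω`. -/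
def RandomFixedPoint {Ω X : Type*} [MeasurableSpace Ω] [MeasurableSpace X] (C : Set X)
    (T : Ω → X → Set X) : Prop :=
  ∃ ξ : Ω → X, Measurable ξ ∧ (∀ ω, ξ ω ∈ C) ∧ ∀ ω, ξ ω ∈ T ω (ξ ω)

/-- The inward set `I_C(x) = {x + r (y - x) : y ∈ C, r ≥ 0}`. -/
def inwardSet {X : Type*} [AddCommGroup X] [Module ℝ X] (C : Set X) (x : X) : Set X :=
  {z | ∃ y ∈ C, ∃ r : ℝ, 0 ≤ r ∧ z = x + r • (y - x)}

/-- Condition `𝓜`: whenever `ξ n, η n : Ω → C` are measurable with `η n ω ∈ T ω (ξ n ω)` for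
all `n, ω` and `ξ n ω - η n ω → 0` for each `ω`, then `T` has a random fixed point. -/
def ConditionM {Ω X : Type*} [MeasurableSpace Ω] [MeasurableSpace X] [NormedAddCommGroup X]
    (C : Set X) (T : Ω → X → Set X) : Prop :=
  ∀ ξ η : ℕ → Ω → X,
    (∀ n, Measurable (ξ n)) → (∀ n, Measurable (η n)) →
    (∀ n ω, ξ n ω ∈ C) → (∀ n ω, η n ω ∈ C) →
    (∀ n ω, η n ω ∈ T ω (ξ n ω)) →
    (∀ ω, Tendsto (fun n => ξ n ω - η n ω) atTop (𝓝 0)) →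
    RandomFixedPoint C T

/-- `S : C → 2^X` is hemicompact: each sequence `x n` in `C` with
`d(x n, S (x n)) → 0` has a convergent subsequence. -/
def Hemicompact {X : Type*} [MetricSpace X] (C : Set X) (S : X → Set X) : Prop :=
  ∀ x : ℕ → X, (∀ n, x n ∈ C) →
    Tendsto (fun n => Metric.infDist (x n) (S (x n))) atTop (𝓝 0) →
    ∃ φ : ℕ → ℕ, StrictMono φ ∧ ∃ l : X, Tendsto (fun n => x (φ n)) atTop (𝓝 l)

/-- The radial retraction of `X` onto its closed unit ball. -/
noncomputable def radialRetraction {X : Type*} [NormedAddCommGroup X] [NormedSpace ℝ X]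
    (x : X) : X :=
  if ‖x‖ ≤ 1 then x else ‖x‖⁻¹ • x

lemma kuratowski_mono {X : Type*} [PseudoEMetricSpace X] {A B : Set X} (h : A ⊆ B) :
    kuratowski A ≤ kuratowski B := by
  apply sInf_le_sInf
  rintro e ⟨cov, hcov, hd⟩
  exact ⟨cov, h.trans hcov, hd⟩

lemma kuratowski_smul_le {X : Type*} [NormedAddCommGroup X] [NormedSpace ℝ X] {A : Set X}
    (hA : Bornology.IsBounded A) :
    kuratowski ((fun q : ℝ × X => q.1 • q.2) '' (Icc (0:ℝ) 1 ×ˢ A)) ≤ kuratowski A := by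
  classical
  set D := (fun q : ℝ × X => q.1 • q.2) '' (Icc (0:ℝ) 1 ×ˢ A) with hD
  apply ENNReal.le_of_forall_pos_le_add
  intro ε hε _
  have hε' : (0:ℝ) < (ε:ℝ) := hε
  -- bound on norms in A
  obtain ⟨R, hR⟩ := hA.subset_closedBall 0
  set M : ℝ := max R 0 with hM
  have hMnn : 0 ≤ M := le_max_right _ _
  have hnormM : ∀ a ∈ A, ‖a‖ ≤ M := by
    intro a ha
    have := hR ha
    simp only [mem_closedBall, dist_zero_right] at this
    exact this.trans (le_max_left _ _)
  obtain ⟨n, hn⟩ := exists_nat_gt (max 1 (M / ε))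
  have hn1 : (1:ℝ) < n := lt_of_le_of_lt (le_max_left _ _) hn
  have hn0 : (0:ℝ) < n := lt_trans one_pos hn1
  have hnN : 0 < n := by exact_mod_cast hn0
  have hMn : M / n < ε := by
    rw [div_lt_iff₀ hn0]
    have : M / ε < n := lt_of_le_of_lt (le_max_right _ _) hn
    calc M = (M / ε) * ε := by field_simp
    _ < n * ε := by exact mul_lt_mul_of_pos_right this hε'
    _ = ε * n := mul_comm _ _
  -- key claim
  have key : ∀ e ∈ {e : ℝ≥0∞ | ∃ cov : Finset (Set X), (A ⊆ ⋃ s ∈ cov, s) ∧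
      ∀ s ∈ cov, EMetric.diam s ≤ e}, kuratowski D ≤ e + ε := by
    rintro e ⟨cov, hcov, hdiam⟩
    apply sInf_le
    refine ⟨Finset.image (fun p : ℕ × Set X =>
      (fun q : ℝ × X => q.1 • q.2) '' (Icc ((p.1:ℝ)/n) ((p.1+1:ℝ)/n) ×ˢ (p.2 ∩ A)))
      (Finset.range n ×ˢ cov), ?_, ?_⟩
    · -- coverage
      rintro z ⟨⟨t, a⟩, ⟨⟨ht0, ht1⟩, haA⟩, rfl⟩
      have := hcov haA
      simp only [mem_iUnion] at this
      obtain ⟨s, hs, has⟩ := this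
      set j : ℕ := min ⌊t * n⌋₊ (n - 1) with hj
      have hjn : j < n := lt_of_le_of_lt (min_le_right _ _) (Nat.sub_lt hnN one_pos)
      have hjt : (j:ℝ) / n ≤ t := by
        rw [div_le_iff₀ hn0]
        calc (j:ℝ) ≤ ⌊t * n⌋₊ := by exact_mod_cast min_le_left _ _
        _ ≤ t * n := Nat.floor_le (by positivity)
      have htj : t ≤ ((j:ℝ) + 1) / n := by
        rw [le_div_iff₀ hn0]
        by_cases h : ⌊t * n⌋₊ ≤ n - 1
        · have hje : j = ⌊t * n⌋₊ := min_eq_left h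
          rw [hje]
          exact le_of_lt (Nat.lt_floor_add_one _)
        · have hje : j = n - 1 := min_eq_right (le_of_not_ge h)
          have : ((j:ℝ) + 1) = n := by
            rw [hje]
            have := Nat.succ_pred_eq_of_pos hnN
            exact_mod_cast congrArg (Nat.cast (R := ℝ)) this
          rw [this]
          calc t * n ≤ 1 * n := mul_le_mul_of_nonneg_right ht1 (le_of_lt hn0)
          _ = n := one_mul _
      simp only [mem_iUnion, Finset.mem_image, Finset.mem_product, Finset.mem_range]
      refine ⟨_, ⟨⟨j, s⟩, ⟨hjn, hs⟩, rfl⟩, ⟨(t, a), ⟨⟨hjt, htj⟩, has, haA⟩, rfl⟩⟩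
    · -- diameters
      intro T hT
      simp only [Finset.mem_image, Finset.mem_product, Finset.mem_range] at hT
      obtain ⟨⟨j, s⟩, ⟨hjn, hs⟩, rfl⟩ := hT
      apply EMetric.diam_le
      rintro x ⟨⟨t, a⟩, ⟨⟨ht0, ht1⟩, ha, haA⟩, rfl⟩
      rintro y ⟨⟨u, b⟩, ⟨⟨hu0, hu1⟩, hb, hbA⟩, rfl⟩
      have hjnn : (0:ℝ) ≤ (j:ℝ)/n := by positivity
      have ht0' : 0 ≤ t := le_trans hjnn ht0
      have hu0' : 0 ≤ u := le_trans hjnn hu0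
      have hjle : ((j:ℝ)+1)/n ≤ 1 := by
        rw [div_le_one hn0]
        have : (j:ℝ) + 1 ≤ n := by exact_mod_cast Nat.succ_le_of_lt hjn
        exact this
      have htle : t ≤ 1 := le_trans ht1 hjle
      calc edist (t • a) (u • b) ≤ edist (t • a) (t • b) + edist (t • b) (u • b) :=
            edist_triangle _ _ _
      _ ≤ e + ε := by
          gcongr
          · -- first term ≤ e
            rw [edist_smul₀]
            have h1 : ‖t‖₊ ≤ 1 := by
              rw [← NNReal.coe_le_coe]
              simp [Real.norm_eq_abs, abs_of_nonneg ht0', htle]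
            have h2 : edist a b ≤ e := le_trans (EMetric.edist_le_diam_of_mem ha hb)
              (hdiam s hs)
            calc (‖t‖₊ : ℝ≥0∞) • edist a b = (‖t‖₊ : ℝ≥0∞) * edist a b := rfl
            _ ≤ 1 * e := by gcongr; exact_mod_cast h1
            _ = e := one_mul _
          · -- second term ≤ ε
            rw [edist_dist, dist_eq_norm, ← sub_smul, norm_smul]
            have habs : |t - u| ≤ 1 / n := by
              replace ht0 : (j:ℝ)/n ≤ t := ht0
              replace ht1 : t ≤ ((j:ℝ)+1)/n := ht1
              replace hu0 : (j:ℝ)/n ≤ u := hu0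
              replace hu1 : u ≤ ((j:ℝ)+1)/n := hu1
              have hsum : (j:ℝ)/n + 1/n = ((j:ℝ)+1)/n := by field_simp
              rw [abs_le]
              constructor <;> linarith
            have hbn : ‖b‖ ≤ M := hnormM b hbA
            have : ‖t - u‖ * ‖b‖ ≤ (1/n) * M := by
              apply mul_le_mul _ hbn (norm_nonneg _) (by positivity)
              rwa [Real.norm_eq_abs]
            have h2 : (1/n : ℝ) * M = M / n := by ring
            calc ENNReal.ofReal (‖t - u‖ * ‖b‖) ≤ ENNReal.ofReal (M / n) := by
                  apply ENNReal.ofReal_le_ofReal; rw [← h2]; exact this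
            _ ≤ ENNReal.ofReal ε := ENNReal.ofReal_le_ofReal (le_of_lt hMn)
            _ = (ε : ℝ≥0∞) := ENNReal.ofReal_coe_nnreal
  calc kuratowski D ≤ ⨅ e ∈ {e : ℝ≥0∞ | ∃ cov : Finset (Set X), (A ⊆ ⋃ s ∈ cov, s) ∧
        ∀ s ∈ cov, EMetric.diam s ≤ e}, e + (ε:ℝ≥0∞) := le_iInf₂ key
  _ = kuratowski A + ε := (ENNReal.sInf_add).symm

lemma radialRetraction_eq {X : Type*} [NormedAddCommGroup X] [NormedSpace ℝ X] :
    radialRetraction (X := X) = fun x => (max 1 ‖x‖)⁻¹ • x := by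
  funext x
  unfold radialRetraction
  by_cases h : ‖x‖ ≤ 1
  · rw [if_pos h, max_eq_left h, inv_one, one_smul]
  · rw [if_neg h, max_eq_right (le_of_lt (lt_of_not_ge h))]

lemma radialRetraction_exists_t {X : Type*} [NormedAddCommGroup X] [NormedSpace ℝ X] (a : X) :
    ∃ t ∈ Icc (0:ℝ) 1, radialRetraction a = t • a := by
  by_cases h : ‖a‖ ≤ 1
  · exact ⟨1, ⟨zero_le_one, le_refl 1⟩, by rw [radialRetraction, if_pos h, one_smul]⟩
  · push_neg at h
    have h0 : (0:ℝ) < ‖a‖ := lt_trans one_pos h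
    refine ⟨‖a‖⁻¹, ⟨inv_nonneg.2 (le_of_lt h0), ?_⟩, by rw [radialRetraction, if_neg (not_le.2 h)]⟩
    rw [inv_le_one_iff₀]
    right; exact le_of_lt h

theorem stmt_16 {X : Type*} [NormedAddCommGroup X] [NormedSpace ℝ X] :
    Continuous (radialRetraction (X := X)) ∧
    (∀ x : X, radialRetraction x ∈ Metric.closedBall (0:X) 1) ∧
    ∀ A : Set X, Bornology.IsBounded A →
      radialRetraction '' A ⊆ closure (convexHull ℝ (A ∪ {0})) ∧
      kuratowski (radialRetraction '' A) ≤ kuratowski A := by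
  refine ⟨?_, ?_, ?_⟩
  · rw [radialRetraction_eq]
    have hne : ∀ x : X, max 1 ‖x‖ ≠ 0 := fun x =>
      (lt_of_lt_of_le one_pos (le_max_left _ _)).ne'
    exact ((continuous_const.max continuous_norm).inv₀ hne).smul continuous_id
  · intro x
    simp only [mem_closedBall, dist_zero_right]
    by_cases h : ‖x‖ ≤ 1
    · rw [radialRetraction, if_pos h]; exact h
    · push_neg at h
      rw [radialRetraction, if_neg (not_le.2 h), norm_smul, norm_inv, norm_norm,
        inv_mul_cancel₀ (lt_trans one_pos h).ne']
  · intro A hA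
    constructor
    · rintro z ⟨a, haA, rfl⟩
      obtain ⟨t, ⟨ht0, ht1⟩, ht⟩ := radialRetraction_exists_t a
      rw [ht]
      apply subset_closure
      have ha : a ∈ convexHull ℝ (A ∪ {0}) := subset_convexHull ℝ _ (Or.inl haA)
      have h0 : (0:X) ∈ convexHull ℝ (A ∪ {0}) := subset_convexHull ℝ _ (Or.inr rfl)
      have := (convex_convexHull ℝ (A ∪ {0})) ha h0 ht0 (sub_nonneg.2 ht1) (by ring)
      simpa using this
    · refine le_trans (kuratowski_mono ?_) (kuratowski_smul_le hA)
      rintro z ⟨a, haA, rfl⟩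
      obtain ⟨t, htIcc, ht⟩ := radialRetraction_exists_t a
      exact ⟨(t, a), ⟨htIcc, haA⟩, ht.symm⟩
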